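/- arXiv:2303.14689 — 2 statements merged into one kernel-verified Lean document; each statement's English description precedes it below -/
import Mathlib

section
/- For r = 5 and every λ ∈ [1/7, 1], we have f_{5,λ}(ε) ≤ λ² for all ε ∈ [0,1]. -/
/-!
Since `i * C(r-1, i) = (r-1) * C(r-2, i-1)`, the sum defining `f_{r,λ}(ε)` becomes the binomial
expansion of `λ² (ε + (1-ε))^(r-2) = λ²` once the `i`-th denominator `λ + (1-λ) 2^(1-i)` is
replaced by `1/i`. So `f_{r,λ}(ε) ≤ λ²` as soon as `i (λ + (1-λ) 2^(1-i)) ≥ 1` for `1 ≤ i ≤ r-1`.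
For `r = 5` these conditions read `1 ≥ 1`, `1 + λ ≥ 1`, `3(1 + 3λ)/4 ≥ 1` and `(1 + 7λ)/2 ≥ 1`;
the last one is exactly `λ ≥ 1/7`.
-/

/-- The function `f_{r,λ}(ε)` from Lemma 4.3 of the paper. -/
noncomputable def f (r : ℕ) (lam ε : ℝ) : ℝ :=
  (1 / (r - 1 : ℝ)) * ∑ i ∈ Finset.Icc 1 (r - 1),
    ((r - 1).choose i : ℝ) * (1 - ε) ^ (r - 1 - i) * ε ^ (i - 1) * lam ^ 2
      / (lam + (1 - lam) * (2 : ℝ) ^ ((1 : ℤ) - (i : ℤ)))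

open Finset

theorem sum_Icc_choose_pred_mul_pow (n : ℕ) (x y : ℝ) :
    ∑ i ∈ Icc 1 (n + 1), (n.choose (i - 1) : ℝ) * y ^ (n + 1 - i) * x ^ (i - 1) = (x + y) ^ n := by
  rw [add_pow, ← Ico_add_one_right_eq_Icc, sum_Ico_eq_sum_range]
  refine sum_congr rfl fun k _ => ?_
  rw [Nat.add_sub_cancel_left, show n + 1 - (1 + k) = n - k by omega]
  ring

theorem f_le_sq_of_forall_one_le_mul_denom {r : ℕ} (hr : 2 ≤ r) {lam ε : ℝ}
    (hε : ε ∈ Set.Icc (0 : ℝ) 1)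
    (hdenom : ∀ i ∈ Icc 1 (r - 1), 1 ≤ (i : ℝ) * (lam + (1 - lam) * (2 : ℝ) ^ ((1 : ℤ) - (i : ℤ)))) :
    f r lam ε ≤ lam ^ 2 := by
  obtain ⟨n, rfl⟩ : ∃ n, r = n + 2 := ⟨r - 2, by omega⟩
  have hcast : ((n + 2 : ℕ) - 1 : ℝ) = n + 1 := by push_cast; ring
  have hterm : ∀ i ∈ Icc 1 (n + 1),
      ((n + 1).choose i : ℝ) * (1 - ε) ^ (n + 1 - i) * ε ^ (i - 1) * lam ^ 2
        / (lam + (1 - lam) * (2 : ℝ) ^ ((1 : ℤ) - (i : ℤ)))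
      ≤ (n + 1) * lam ^ 2 * ((n.choose (i - 1) : ℝ) * (1 - ε) ^ (n + 1 - i) * ε ^ (i - 1)) := by
    intro i hi
    set d := lam + (1 - lam) * (2 : ℝ) ^ ((1 : ℤ) - (i : ℤ))
    have hd : 1 ≤ i * d := hdenom i hi
    obtain ⟨k, rfl⟩ : ∃ k, i = k + 1 := ⟨i - 1, by rw [mem_Icc] at hi; omega⟩
    have hchoose : ((n + 1).choose (k + 1) : ℝ) * (k + 1 : ℕ) = (n + 1) * n.choose k := by
      exact_mod_cast (Nat.add_one_mul_choose_eq n k).symm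
    have hcoef :
        0 ≤ ((n + 1).choose (k + 1) : ℝ) * (1 - ε) ^ (n + 1 - (k + 1)) * ε ^ k * lam ^ 2 := by
      have hε₀ : 0 ≤ ε := hε.1
      have hε₁ : 0 ≤ 1 - ε := sub_nonneg.2 hε.2
      positivity
    rw [div_le_iff₀ (by nlinarith [(Nat.cast_nonneg (k + 1) : (0 : ℝ) ≤ _)]), Nat.add_sub_cancel]
    calc _ ≤ ((n + 1).choose (k + 1) : ℝ) * (1 - ε) ^ (n + 1 - (k + 1)) * ε ^ k * lam ^ 2
          * ((k + 1 : ℕ) * d) := le_mul_of_one_le_right hcoef hd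
      _ = _ := by linear_combination (1 - ε) ^ (n + 1 - (k + 1)) * ε ^ k * lam ^ 2 * d * hchoose
  calc f (n + 2) lam ε ≤ 1 / (n + 1 : ℝ) * ∑ i ∈ Icc 1 (n + 1),
        (n + 1) * lam ^ 2 * ((n.choose (i - 1) : ℝ) * (1 - ε) ^ (n + 1 - i) * ε ^ (i - 1)) := by
        rw [f, hcast]
        exact mul_le_mul_of_nonneg_left (sum_le_sum hterm) (by positivity)
    _ = lam ^ 2 := by
      rw [← mul_sum, sum_Icc_choose_pred_mul_pow, add_sub_cancel, one_pow]
      field_simp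

/-- Remark after Lemma 4.3: for `r = 5` and every `λ ∈ [1/7, 1]`,
`f_{5,λ}(ε) ≤ λ²` for all `ε ∈ [0,1]`. -/
theorem stmt10 (lam : ℝ) (hlam : lam ∈ Set.Icc (1 / 7 : ℝ) 1)
    (ε : ℝ) (hε : ε ∈ Set.Icc (0 : ℝ) 1) :
    f 5 lam ε ≤ lam ^ 2 := by
  refine f_le_sq_of_forall_one_le_mul_denom (by norm_num) hε fun i hi => ?_
  have h7 := hlam.1
  fin_cases hi <;> norm_num <;> linarith
end

section
/- The function g : [0,∞) → ℝ defined by g(s) = ∫ tanh( s + √s·z ) dγ(z), where γ is the standard Gaussian measure on ℝ, is continuous and strictly increasing on [0,∞). -/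
open ProbabilityTheory MeasureTheory

/-- `g(s) = ∫ tanh(s + √s·z) dγ(z)`, `γ` the standard Gaussian measure on `ℝ`. -/
noncomputable def g (t : ℝ) : ℝ :=
  ∫ z, Real.tanh (t + Real.sqrt t * z) ∂(gaussianReal 0 1)

/-!
Substituting `s = u²` gives `g s = H (√s)` with `H u = ∫ h (u² + u z) dγ(z)`, `h = tanh`; the
parametrisation by `u` removes the singularity of `√s` at `0`. Differentiating under the integral,
`H' u = ∫ h'(u² + u z) (2u + z) dγ(z)`, and Gaussian integration by parts (Stein's lemma
`∫ z f(z) dγ = ∫ f' dγ`) turns the factor `z` into a derivative, so that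
`H' u = u ∫ (2h' + h'')(u² + u z) dγ(z)`. For `h = tanh` one has
`2h' + h'' = 2 (1 - tanh²) (1 - tanh) > 0`, hence `H' > 0` on `(0, ∞)`.
-/

open Real Set Filter
open scoped NNReal

namespace Real

theorem hasDerivAt_tanh (x : ℝ) : HasDerivAt tanh (1 - tanh x ^ 2) x := by
  have h : HasDerivAt (fun y => sinh y / cosh y) _ x :=
    (hasDerivAt_sinh x).div (hasDerivAt_cosh x) (cosh_pos x).ne'
  simp only [← tanh_eq_sinh_div_cosh] at h
  refine h.congr_deriv ?_
  rw [tanh_eq_sinh_div_cosh]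
  field_simp

theorem hasDerivAt_one_sub_tanh_sq (x : ℝ) :
    HasDerivAt (fun x => 1 - tanh x ^ 2) (-2 * tanh x * (1 - tanh x ^ 2)) x :=
  (((hasDerivAt_tanh x).pow 2).const_sub 1).congr_deriv (by ring)

theorem abs_one_sub_tanh_sq_le_one (x : ℝ) : |1 - tanh x ^ 2| ≤ 1 := by
  rw [abs_of_pos (by linarith [tanh_sq_lt_one x])]
  linarith [sq_nonneg (tanh x)]

end Real

theorem measurable_of_hasDerivAt {f f' : ℝ → ℝ} (hf : ∀ x, HasDerivAt f (f' x) x) :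
    Measurable f' := by
  rw [show f' = deriv f from funext fun x => (hf x).deriv.symm]
  exact measurable_deriv f

theorem MeasureTheory.integral_pos_of_forall_pos {α : Type*} [MeasurableSpace α]
    {μ : Measure α} [NeZero μ] {f : α → ℝ} (hf : Integrable f μ) (hpos : ∀ x, 0 < f x) :
    0 < ∫ x, f x ∂μ := by
  rw [integral_pos_iff_support_of_nonneg (fun x => (hpos x).le) hf,
    Function.support_eq_univ fun x => (hpos x).ne']
  exact Measure.measure_univ_pos.2 (NeZero.ne μ)

namespace ProbabilityTheory

variable {μ : ℝ} {v : ℝ≥0}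

theorem hasDerivAt_gaussianPDFReal (μ : ℝ) (v : ℝ≥0) (x : ℝ) :
    HasDerivAt (gaussianPDFReal μ v) (-((x - μ) / v) * gaussianPDFReal μ v x) x := by
  have h : HasDerivAt (fun x => -(x - μ) ^ 2 / (2 * v)) (-(2 * (x - μ)) / (2 * v)) x := by
    simpa using (((hasDerivAt_id x).sub_const μ).pow 2).neg.div_const (2 * (v : ℝ))
  rw [gaussianPDFReal_def]
  refine (h.exp.const_mul _).congr_deriv ?_
  beta_reduce
  ring

theorem integrable_gaussianReal_iff (hv : v ≠ 0) {f : ℝ → ℝ} :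
    Integrable f (gaussianReal μ v) ↔ Integrable (fun x => gaussianPDFReal μ v x * f x) := by
  rw [gaussianReal_of_var_ne_zero _ hv, integrable_withDensity_iff_integrable_smul'
    (measurable_gaussianPDF μ v) (ae_of_all _ fun _ => gaussianPDF_lt_top)]
  simp [toReal_gaussianPDF]

theorem integrable_deriv_gaussianPDFReal (μ : ℝ) (v : ℝ≥0) :
    Integrable (fun x => -((x - μ) / v) * gaussianPDFReal μ v x) := by
  rcases eq_or_ne v 0 with rfl | hv
  · simp
  have h : Integrable (fun x => -((x - μ) / v)) (gaussianReal μ v) :=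
    (((memLp_id_gaussianReal 1).integrable le_rfl).sub (integrable_const μ)).div_const _ |>.neg
  simpa [mul_comm] using (integrable_gaussianReal_iff hv).1 h

/-- **Stein's lemma**. -/
theorem integral_sub_mul_gaussianReal {f f' : ℝ → ℝ} {C C' : ℝ}
    (hf : ∀ x, HasDerivAt f (f' x) x) (hfC : ∀ x, |f x| ≤ C) (hf'C : ∀ x, |f' x| ≤ C') :
    ∫ x, (x - μ) * f x ∂gaussianReal μ v = v * ∫ x, f' x ∂gaussianReal μ v := by
  rcases eq_or_ne v 0 with rfl | hv
  · simp
  have hf_meas : AEStronglyMeasurable f :=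
    (Differentiable.continuous fun x => (hf x).differentiableAt).aestronglyMeasurable
  have hf'_meas : AEStronglyMeasurable f' := (measurable_of_hasDerivAt hf).aestronglyMeasurable
  have hpdf := integrable_gaussianPDFReal μ v
  have ibp := integral_mul_deriv_eq_deriv_mul_of_integrable (u := f) (v := gaussianPDFReal μ v)
    (fun x _ => hf x) (fun x _ => hasDerivAt_gaussianPDFReal μ v x)
    ((integrable_deriv_gaussianPDFReal μ v).bdd_mul hf_meas (ae_of_all _ hfC))
    (hpdf.bdd_mul hf'_meas (ae_of_all _ hf'C)) (hpdf.bdd_mul hf_meas (ae_of_all _ hfC))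
  simp only [integral_gaussianReal_eq_integral_smul hv, smul_eq_mul]
  have hv' : (v : ℝ) ≠ 0 := mod_cast hv
  calc ∫ x, gaussianPDFReal μ v x * ((x - μ) * f x)
      = -v * ∫ x, f x * (-((x - μ) / v) * gaussianPDFReal μ v x) := by
        rw [← integral_const_mul]
        congr 1 with x
        field_simp
    _ = v * ∫ x, gaussianPDFReal μ v x * f' x := by
        simp only [ibp, mul_comm (f' _), neg_mul_neg]

end ProbabilityTheory

section SqAddMul

variable {h h' h'' : ℝ → ℝ} {C₀ C₁ C₂ : ℝ}

theorem hasDerivAt_integral_comp_sq_add_mul (hh : ∀ x, HasDerivAt h (h' x) x)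
    (h₀ : ∀ x, |h x| ≤ C₀) (h₁ : ∀ x, |h' x| ≤ C₁) (u : ℝ) :
    HasDerivAt (fun u => ∫ z, h (u ^ 2 + u * z) ∂gaussianReal 0 1)
      (∫ z, h' (u ^ 2 + u * z) * (2 * u + z) ∂gaussianReal 0 1) u := by
  have h_cont : Continuous h := Differentiable.continuous fun x => (hh x).differentiableAt
  have h'_meas := measurable_of_hasDerivAt hh
  have bound_int : Integrable (fun z => C₁ * (2 * (|u| + 1) + |z|)) (gaussianReal 0 1) :=
    ((integrable_const _).add ((memLp_id_gaussianReal 1).integrable le_rfl).abs).const_mul _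
  refine (hasDerivAt_integral_of_dominated_loc_of_deriv_le (F := fun x z => h (x ^ 2 + x * z))
    (F' := fun x z => h' (x ^ 2 + x * z) * (2 * x + z)) (Metric.ball_mem_nhds u one_pos)
    (Eventually.of_forall fun x =>
      (by fun_prop : Continuous fun z => h (x ^ 2 + x * z)).aestronglyMeasurable)
    (Integrable.of_bound (by fun_prop : Continuous fun z => h (u ^ 2 + u * z)).aestronglyMeasurable
      C₀ (ae_of_all _ fun z => h₀ _))
    (by fun_prop : Measurable fun z => h' (u ^ 2 + u * z) * (2 * u + z)).aestronglyMeasurable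
    (ae_of_all _ fun z x hx => ?_) bound_int (ae_of_all _ fun z x _ => ?_)).2
  · have hx : |x| ≤ |u| + 1 := by
      have := abs_sub_abs_le_abs_sub x u
      rw [Metric.mem_ball, Real.dist_eq] at hx
      linarith
    rw [Real.norm_eq_abs, abs_mul]
    refine mul_le_mul (h₁ _) ?_ (abs_nonneg _) ((abs_nonneg _).trans (h₁ 0))
    calc |2 * x + z| ≤ 2 * |x| + |z| := by simpa [abs_mul] using abs_add_le (2 * x) z
      _ ≤ 2 * (|u| + 1) + |z| := by linarith
  · have hlin : HasDerivAt (fun x => x ^ 2 + x * z) (2 * x + z) x :=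
      ((hasDerivAt_pow 2 x).add ((hasDerivAt_id x).mul_const z)).congr_deriv (by ring)
    exact (hh _).comp x hlin

theorem integral_deriv_comp_sq_add_mul (hh' : ∀ x, HasDerivAt h' (h'' x) x)
    (h₁ : ∀ x, |h' x| ≤ C₁) (h₂ : ∀ x, |h'' x| ≤ C₂) (u : ℝ) :
    ∫ z, h' (u ^ 2 + u * z) * (2 * u + z) ∂gaussianReal 0 1
      = u * ∫ z, (2 * h' (u ^ 2 + u * z) + h'' (u ^ 2 + u * z)) ∂gaussianReal 0 1 := by
  have h'_cont : Continuous h' := Differentiable.continuous fun x => (hh' x).differentiableAt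
  have h''_meas := measurable_of_hasDerivAt hh'
  have hlin (z : ℝ) : HasDerivAt (fun z => u ^ 2 + u * z) u z := by
    simpa using ((hasDerivAt_id z).const_mul u).const_add (u ^ 2)
  have stein := integral_sub_mul_gaussianReal (μ := 0) (v := 1)
    (f := fun z => h' (u ^ 2 + u * z)) (fun z => (hh' _).comp z (hlin z)) (fun z => h₁ _)
    (C' := C₂ * |u|) (fun z => by
      rw [abs_mul]; exact mul_le_mul_of_nonneg_right (h₂ _) (abs_nonneg u))
  have int₁ : Integrable (fun z => h' (u ^ 2 + u * z)) (gaussianReal 0 1) :=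
    Integrable.of_bound (by fun_prop : Continuous fun z => h' (u ^ 2 + u * z)).aestronglyMeasurable
      C₁ (ae_of_all _ fun z => h₁ _)
  have int₂ : Integrable (fun z => h'' (u ^ 2 + u * z)) (gaussianReal 0 1) :=
    Integrable.of_bound (by fun_prop : Measurable fun z => h'' (u ^ 2 + u * z)).aestronglyMeasurable
      C₂ (ae_of_all _ fun z => h₂ _)
  have int₃ : Integrable (fun z => (z - 0) * h' (u ^ 2 + u * z)) (gaussianReal 0 1) :=
    (((memLp_id_gaussianReal 1).integrable le_rfl).sub (integrable_const 0)).mul_bdd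
      int₁.aestronglyMeasurable (ae_of_all _ fun z => h₁ _)
  calc ∫ z, h' (u ^ 2 + u * z) * (2 * u + z) ∂gaussianReal 0 1
      = ∫ z, (2 * u * h' (u ^ 2 + u * z) + (z - 0) * h' (u ^ 2 + u * z)) ∂gaussianReal 0 1 :=
        integral_congr_ae (ae_of_all _ fun z => by ring)
    _ = 2 * u * ∫ z, h' (u ^ 2 + u * z) ∂gaussianReal 0 1
          + u * ∫ z, h'' (u ^ 2 + u * z) ∂gaussianReal 0 1 := by
        rw [integral_add (int₁.const_mul _) int₃, integral_const_mul, stein, integral_mul_const]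
        push_cast
        ring
    _ = u * ∫ z, (2 * h' (u ^ 2 + u * z) + h'' (u ^ 2 + u * z)) ∂gaussianReal 0 1 := by
        rw [integral_add (int₁.const_mul _) int₂, integral_const_mul]
        ring

theorem continuous_integral_comp_sq_add_mul (hh : ∀ x, HasDerivAt h (h' x) x)
    (h₀ : ∀ x, |h x| ≤ C₀) (h₁ : ∀ x, |h' x| ≤ C₁) :
    Continuous fun u => ∫ z, h (u ^ 2 + u * z) ∂gaussianReal 0 1 :=
  Differentiable.continuous fun u =>
    (hasDerivAt_integral_comp_sq_add_mul hh h₀ h₁ u).differentiableAt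

theorem strictMonoOn_integral_comp_sq_add_mul (hh : ∀ x, HasDerivAt h (h' x) x)
    (hh' : ∀ x, HasDerivAt h' (h'' x) x) (h₀ : ∀ x, |h x| ≤ C₀) (h₁ : ∀ x, |h' x| ≤ C₁)
    (h₂ : ∀ x, |h'' x| ≤ C₂) (hpos : ∀ x, 0 < 2 * h' x + h'' x) :
    StrictMonoOn (fun u => ∫ z, h (u ^ 2 + u * z) ∂gaussianReal 0 1) (Ici 0) := by
  refine strictMonoOn_of_deriv_pos (convex_Ici 0)
    (continuous_integral_comp_sq_add_mul hh h₀ h₁).continuousOn fun u hu => ?_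
  rw [interior_Ici] at hu
  rw [(hasDerivAt_integral_comp_sq_add_mul hh h₀ h₁ u).deriv,
    integral_deriv_comp_sq_add_mul hh' h₁ h₂ u]
  have h'_meas := measurable_of_hasDerivAt hh
  have h''_meas := measurable_of_hasDerivAt hh'
  have hmeas : Measurable fun z => 2 * h' (u ^ 2 + u * z) + h'' (u ^ 2 + u * z) := by fun_prop
  refine mul_pos hu (integral_pos_of_forall_pos (Integrable.of_bound hmeas.aestronglyMeasurable
    (2 * C₁ + C₂) (ae_of_all _ fun z => ?_)) fun z => hpos _)
  calc ‖2 * h' (u ^ 2 + u * z) + h'' (u ^ 2 + u * z)‖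
      ≤ 2 * |h' (u ^ 2 + u * z)| + |h'' (u ^ 2 + u * z)| := by
        simpa [abs_mul] using norm_add_le (2 * h' (u ^ 2 + u * z)) (h'' (u ^ 2 + u * z))
    _ ≤ 2 * C₁ + C₂ := by linarith [h₁ (u ^ 2 + u * z), h₂ (u ^ 2 + u * z)]

end SqAddMul

/-- Core of the proof of Lemma F.2 (equivalent to the `q = 2` case of Sly's Lemma 4.4):
the function `g(s) = ∫ tanh(s + √s·z) dγ(z)` is continuous and strictly increasing
on `[0,∞)`. -/
theorem stmt13 : ContinuousOn g (Set.Ici 0) ∧ StrictMonoOn g (Set.Ici 0) := by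
  have tanh_bound (x : ℝ) : |tanh x| ≤ 1 := (abs_tanh_lt_one x).le
  have tanh''_bound (x : ℝ) : |-2 * tanh x * (1 - tanh x ^ 2)| ≤ 2 := by
    rw [abs_mul, abs_mul, abs_neg, abs_two, mul_assoc]
    nlinarith [mul_le_mul (tanh_bound x) (abs_one_sub_tanh_sq_le_one x) (abs_nonneg _) zero_le_one]
  have hpos (x : ℝ) : 0 < 2 * (1 - tanh x ^ 2) + -2 * tanh x * (1 - tanh x ^ 2) := by
    have h₁ : 0 < 1 - tanh x ^ 2 := sub_pos.2 (tanh_sq_lt_one x)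
    have h₂ : 0 < 1 - tanh x := sub_pos.2 (tanh_lt_one x)
    nlinarith [mul_pos h₁ h₂]
  have hg : EqOn ((fun u => ∫ z, tanh (u ^ 2 + u * z) ∂gaussianReal 0 1) ∘ sqrt) g (Ici 0) :=
    fun s hs => by simp [g, sq_sqrt (show 0 ≤ s from hs)]
  refine ⟨(((continuous_integral_comp_sq_add_mul hasDerivAt_tanh tanh_bound
    abs_one_sub_tanh_sq_le_one).comp continuous_sqrt).continuousOn).congr hg.symm, ?_⟩
  exact ((strictMonoOn_integral_comp_sq_add_mul hasDerivAt_tanh hasDerivAt_one_sub_tanh_sq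
    tanh_bound abs_one_sub_tanh_sq_le_one tanh''_bound hpos).comp strictMonoOn_sqrt
    fun s _ => sqrt_nonneg s).congr hg
end
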